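/- Let D = diag(D^s, D^f) with ρ(I^s + Δt D^s) < 1 and ρ(I^f + δt D^f) < 1, and consider the mean recursion μ_{n+1} = (I + D_n) μ_n where D_n = [[Δt D^s, 0],[(Δt − δt) R_n D^s, δt D^f]] with R_n ∈ ℝ^{d_f×d_s} a sequence of matrices with sup_n ‖R_n‖ < ∞. Then the spectrum of I + D_n is σ(I^s + Δt D^s) ∪ σ(I^f + δt D^f) for every n, and μ_n → 0 as n → ∞. -/

import Mathlib

/-!
The matrix `I + D_n` is block lower triangular, so its characteristic polynomial is the product
of those of its diagonal blocks, which gives the spectrum.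

For the convergence, Gelfand's formula turns a spectral radius `< 1` into summability of
`‖A ^ k‖`. The slow component evolves autonomously, `μˢ_k = (I + Δt Dˢ) ^ k μˢ_0`, so its norms
are summable. The fast component obeys `μᶠ_{k+1} = (I + δt Dᶠ) μᶠ_k + e_k` with the forcing
`e_k = (Δt - δt) R_k Dˢ μˢ_k`, whose norms are summable because `R_k` is bounded. Unrolling,
`‖μᶠ_{N+1}‖` is bounded by a term of the Cauchy product of two summable sequences, and such
terms tend to zero.
-/

open Matrix Filter Topology Finset

attribute [local instance] Matrix.frobeniusNormedAddCommGroup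
attribute [local instance] Matrix.frobeniusNormSMulClass Matrix.frobeniusNormedRing
attribute [local instance] Matrix.frobeniusNormedAlgebra

theorem summable_norm_pow_of_spectralRadius_lt_one {A : Type*} [NormedRing A]
    [NormedAlgebra ℂ A] [CompleteSpace A] (a : A) (ha : spectralRadius ℂ a < 1) :
    Summable fun n ↦ ‖a ^ n‖ := by
  obtain ⟨t, hρt, ht1⟩ := exists_between ha
  have hr1 : t.toReal < 1 := by
    simpa using (ENNReal.toReal_lt_toReal ht1.ne_top ENNReal.one_ne_top).2 ht1
  refine (summable_geometric_of_lt_one ENNReal.toReal_nonneg hr1).of_norm_bounded_eventually_nat ?_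
  filter_upwards [(spectrum.pow_norm_pow_one_div_tendsto_nhds_spectralRadius a).eventually_lt_const
    hρt, eventually_gt_atTop 0] with n hn hn0
  have hroot : ‖a ^ n‖ ^ (n : ℝ)⁻¹ ≤ t.toReal := by
    rw [← one_div]
    exact (ENNReal.ofReal_lt_iff_lt_toReal (by positivity) ht1.ne_top).1 hn |>.le
  rw [norm_norm, ← Real.rpow_natCast]
  exact (Real.rpow_inv_le_iff_of_pos (norm_nonneg _) ENNReal.toReal_nonneg (by positivity)).1 hroot

theorem tendsto_sum_range_mul_sub_zero_of_summable {a b : ℕ → ℝ} (ha : Summable a)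
    (hb : Summable b) (ha0 : 0 ≤ a) (hb0 : 0 ≤ b) :
    Tendsto (fun N ↦ ∑ k ∈ range (N + 1), a k * b (N - k)) atTop (𝓝 0) :=
  (summable_sum_mul_range_of_summable_mul (ha.mul_of_nonneg hb ha0 hb0)).tendsto_atTop_zero

namespace Matrix

theorem one_add_fromBlocks {m n R : Type*} [DecidableEq m] [DecidableEq n] [AddZeroClass R]
    [One R] (A : Matrix m m R) (B : Matrix m n R) (C : Matrix n m R) (D : Matrix n n R) :
    1 + fromBlocks A B C D = fromBlocks (1 + A) B C (1 + D) := by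
  rw [← fromBlocks_one, fromBlocks_add, zero_add, zero_add]

theorem spectrum_fromBlocks_zero₁₂ {m n K : Type*} [Fintype m] [DecidableEq m] [Fintype n]
    [DecidableEq n] [Field K] (A : Matrix m m K) (C : Matrix n m K) (D : Matrix n n K) :
    spectrum K (fromBlocks A 0 C D) = spectrum K A ∪ spectrum K D := by
  ext z
  simp only [Set.mem_union, mem_spectrum_iff_isRoot_charpoly, charpoly_fromBlocks_zero₁₂,
    Polynomial.IsRoot.def, Polynomial.eval_mul, mul_eq_zero]

theorem eq_pow_mulVec_of_recursion {n R : Type*} [Fintype n] [DecidableEq n] [Semiring R]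
    {A : Matrix n n R} {x : ℕ → n → R} (hx : ∀ k, x (k + 1) = A *ᵥ x k) (k : ℕ) :
    x k = A ^ k *ᵥ x 0 := by
  induction k with
  | zero => simp
  | succ k ih => rw [hx, ih, mulVec_mulVec, pow_succ']

theorem eq_pow_mulVec_add_sum_of_recursion {n R : Type*} [Fintype n] [DecidableEq n] [Semiring R]
    {A : Matrix n n R} {y e : ℕ → n → R} (hy : ∀ k, y (k + 1) = A *ᵥ y k + e k) (N : ℕ) :
    y (N + 1) = A ^ (N + 1) *ᵥ y 0 + ∑ k ∈ range (N + 1), A ^ (N - k) *ᵥ e k := by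
  induction N with
  | zero => simp [hy]
  | succ N ih =>
    have hpow : ∀ k ∈ range (N + 1), A *ᵥ (A ^ (N - k) *ᵥ e k) = A ^ (N + 1 - k) *ᵥ e k := by
      intro k hk
      rw [mulVec_mulVec, ← pow_succ', Nat.sub_add_comm (Nat.le_of_lt_succ (mem_range.1 hk))]
    rw [hy, ih, mulVec_add, mulVec_sum, sum_congr rfl hpow, mulVec_mulVec, ← pow_succ',
      sum_range_succ _ (N + 1), Nat.sub_self, pow_zero, one_mulVec, add_assoc]

theorem norm_entry_le_frobenius_norm {m n α : Type*} [Fintype m] [Fintype n]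
    [NormedAddCommGroup α] (A : Matrix m n α) (i : m) (j : n) : ‖A i j‖ ≤ ‖A‖ :=
  (PiLp.norm_apply_le (WithLp.toLp 2 (A i)) j).trans
    (PiLp.norm_apply_le (WithLp.toLp 2 fun i ↦ WithLp.toLp 2 (A i)) i)

theorem norm_mulVec_le {m n α : Type*} [Fintype m] [Fintype n] [NormedRing α]
    (A : Matrix m n α) (v : n → α) : ‖A *ᵥ v‖ ≤ Fintype.card n * ‖A‖ * ‖v‖ := by
  refine pi_norm_le_iff_of_nonneg (by positivity) |>.2 fun i ↦ ?_
  calc ‖∑ j, A i j * v j‖ ≤ ∑ j, ‖A i j‖ * ‖v j‖ :=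
        (norm_sum_le _ _).trans (sum_le_sum fun j _ ↦ norm_mul_le _ _)
    _ ≤ ∑ _j : n, ‖A‖ * ‖v‖ := by
        gcongr with j
        exacts [norm_entry_le_frobenius_norm A i j, norm_le_pi_norm v j]
    _ = Fintype.card n * ‖A‖ * ‖v‖ := by simp [mul_assoc]

variable {m n : Type*} [Fintype m] [DecidableEq m] [Fintype n] [DecidableEq n]

theorem summable_norm_pow_of_spectralRadius_map_lt_one (A : Matrix n n ℝ)
    (hA : spectralRadius ℂ (A.map (Complex.ofReal : ℝ → ℂ)) < 1) :
    Summable fun k ↦ ‖A ^ k‖ := by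
  have : CompleteSpace (Matrix n n ℂ) := FiniteDimensional.complete ℂ _
  convert summable_norm_pow_of_spectralRadius_lt_one _ hA using 2 with k
  change ‖A ^ k‖ = ‖A.map Complex.ofRealHom ^ k‖
  rw [← Matrix.map_pow]
  exact (frobenius_norm_map_eq _ _ Complex.norm_real).symm

theorem summable_norm_pow_mulVec {A : Matrix n n ℝ} (hA : Summable fun k ↦ ‖A ^ k‖)
    (v : n → ℝ) : Summable fun k ↦ ‖A ^ k *ᵥ v‖ :=
  ((hA.mul_left (Fintype.card n : ℝ)).mul_right ‖v‖).of_nonneg_of_le (fun _ ↦ norm_nonneg _)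
    fun _ ↦ norm_mulVec_le _ _

theorem tendsto_zero_of_forced_recursion {A : Matrix n n ℝ}
    (hA : Summable fun k ↦ ‖A ^ k‖) {y e : ℕ → n → ℝ} (he : Summable fun k ↦ ‖e k‖)
    (hy : ∀ k, y (k + 1) = A *ᵥ y k + e k) : Tendsto y atTop (𝓝 0) := by
  set c : ℝ := (Fintype.card n : ℝ)
  have hbound : ∀ N, ‖y (N + 1)‖ ≤
      c * ‖A ^ (N + 1)‖ * ‖y 0‖ + c * ∑ k ∈ range (N + 1), ‖e k‖ * ‖A ^ (N - k)‖ := by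
    intro N
    rw [eq_pow_mulVec_add_sum_of_recursion hy, mul_sum]
    refine (norm_add_le _ _).trans (add_le_add (norm_mulVec_le _ _) ?_)
    refine (norm_sum_le _ _).trans (sum_le_sum fun k _ ↦ (norm_mulVec_le _ _).trans_eq ?_)
    ring
  have hconv : Tendsto (fun N ↦ ∑ k ∈ range (N + 1), ‖e k‖ * ‖A ^ (N - k)‖) atTop (𝓝 0) :=
    tendsto_sum_range_mul_sub_zero_of_summable (a := fun k ↦ ‖e k‖) (b := fun k ↦ ‖A ^ k‖)
      he hA (fun _ ↦ norm_nonneg _) fun _ ↦ norm_nonneg _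
  have hpow : Tendsto (fun N ↦ ‖A ^ (N + 1)‖) atTop (𝓝 0) :=
    (tendsto_add_atTop_iff_nat 1).2 hA.tendsto_atTop_zero
  rw [← tendsto_add_atTop_iff_nat 1]
  refine squeeze_zero_norm hbound ?_
  simpa using ((hpow.const_mul c).mul_const ‖y 0‖).add (hconv.const_mul c)

theorem tendsto_zero_of_fromBlocks_recursion {A : Matrix m m ℝ} {D : Matrix n n ℝ}
    {C : ℕ → Matrix n m ℝ} (hA : Summable fun k ↦ ‖A ^ k‖) (hD : Summable fun k ↦ ‖D ^ k‖)
    (hC : ∃ c, ∀ k, ‖C k‖ ≤ c) {μ : ℕ → m ⊕ n → ℝ}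
    (hμ : ∀ k, μ (k + 1) = fromBlocks A 0 (C k) D *ᵥ μ k) : Tendsto μ atTop (𝓝 0) := by
  obtain ⟨c, hc⟩ := hC
  set x : ℕ → m → ℝ := fun k ↦ μ k ∘ Sum.inl
  set y : ℕ → n → ℝ := fun k ↦ μ k ∘ Sum.inr
  have hx : ∀ k, x (k + 1) = A *ᵥ x k := fun k ↦ by simp [x, hμ, fromBlocks_mulVec]
  have hy : ∀ k, y (k + 1) = D *ᵥ y k + C k *ᵥ x k := fun k ↦ by
    simp [x, y, hμ, fromBlocks_mulVec, add_comm]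
  have hx_summable : Summable fun k ↦ ‖x k‖ := by
    simpa only [← eq_pow_mulVec_of_recursion hx] using summable_norm_pow_mulVec hA (x 0)
  have hforcing : Summable fun k ↦ ‖C k *ᵥ x k‖ :=
    (hx_summable.mul_left (Fintype.card m * c)).of_nonneg_of_le (fun _ ↦ norm_nonneg _) fun k ↦
      (norm_mulVec_le _ _).trans (by gcongr; exact hc k)
  have hx_lim : Tendsto x atTop (𝓝 0) :=
    tendsto_zero_iff_norm_tendsto_zero.2 hx_summable.tendsto_atTop_zero
  have hy_lim : Tendsto y atTop (𝓝 0) := tendsto_zero_of_forced_recursion hD hforcing hy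
  refine tendsto_pi_nhds.2 fun i ↦ ?_
  cases i with
  | inl i => exact tendsto_pi_nhds.1 hx_lim i
  | inr i => exact tendsto_pi_nhds.1 hy_lim i

end Matrix

/-- For the mean recursion `μ_{n+1} = (I + D_n) μ_n` with
`D_n = [[Δt D^s, 0],[(Δt − δt) R_n D^s, δt D^f]]`, `ρ(I + Δt D^s) < 1`,
`ρ(I + δt D^f) < 1` and `sup_n ‖R_n‖ < ∞`, the spectrum of `I + D_n` equals
`σ(I + Δt D^s) ∪ σ(I + δt D^f)` for every `n`, and `μ_n → 0`. -/
theorem stmt18 {ds df : ℕ} (Ds : Matrix (Fin ds) (Fin ds) ℝ)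
    (Df : Matrix (Fin df) (Fin df) ℝ) (R : ℕ → Matrix (Fin df) (Fin ds) ℝ)
    (Δt δt : ℝ)
    (hρs : spectralRadius ℂ ((1 + Δt • Ds).map (Complex.ofReal : ℝ → ℂ)) < 1)
    (hρf : spectralRadius ℂ ((1 + δt • Df).map (Complex.ofReal : ℝ → ℂ)) < 1)
    (hR : ∃ c : ℝ, ∀ n : ℕ, ‖R n‖ ≤ c)
    (μ : ℕ → (Fin ds ⊕ Fin df → ℝ))
    (hrec : ∀ n : ℕ, μ (n + 1) =
      (1 + Matrix.fromBlocks (Δt • Ds) 0 ((Δt - δt) • (R n * Ds)) (δt • Df)) *ᵥ μ n) :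
    (∀ n : ℕ,
      spectrum ℂ ((1 + Matrix.fromBlocks (Δt • Ds) 0 ((Δt - δt) • (R n * Ds))
          (δt • Df)).map (Complex.ofReal : ℝ → ℂ)) =
        spectrum ℂ ((1 + Δt • Ds).map (Complex.ofReal : ℝ → ℂ)) ∪
          spectrum ℂ ((1 + δt • Df).map (Complex.ofReal : ℝ → ℂ))) ∧
    Tendsto μ atTop (nhds 0) := by
  refine ⟨fun n ↦ ?_, ?_⟩
  · rw [one_add_fromBlocks, fromBlocks_map, Matrix.map_zero _ Complex.ofReal_zero,
      spectrum_fromBlocks_zero₁₂]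
  · obtain ⟨c, hc⟩ := hR
    have hC : ∀ n, ‖(Δt - δt) • (R n * Ds)‖ ≤ ‖Δt - δt‖ * (c * ‖Ds‖) := fun n ↦ by
      rw [norm_smul]
      gcongr
      exact (frobenius_norm_mul _ _).trans (by gcongr; exact hc n)
    exact tendsto_zero_of_fromBlocks_recursion
      (summable_norm_pow_of_spectralRadius_map_lt_one _ hρs)
      (summable_norm_pow_of_spectralRadius_map_lt_one _ hρf) ⟨_, hC⟩
      fun n ↦ by rw [hrec, one_add_fromBlocks]
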